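/- arXiv:1412.8624 — 5 statements merged into one kernel-verified Lean document; each statement's English description precedes it below -/
import Mathlib

section
/- Suppose x, λ, u : ℝ → ℝ with x and λ differentiable, and for all t the function u satisfies u(t) = (x(t)·(α + λ(t)·β·P·(1 - x(t))))/(2C), the state satisfies x'(t) = β·x(t)·(1 - x(t))·(P·u(t) - π₀), and the co-state satisfies the Pontryagin condition λ'(t) = -(α·u(t) + λ(t)·β·(1 - 2·x(t))·(P·u(t) - π₀)). Then u is differentiable and u'(t) = -(α·β·π₀/(2C))·x(t)·(1 - x(t)) for all t. -/
/-!
Differentiating `2C·u = x·(α + λβP(1 - x))` along the flow and substituting the state and co-state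
equations, every term containing `u` or `λ` cancels, leaving `2C·u' = -αβπ₀·x(1 - x)`.
-/

section QualityRevenueControl

variable (α β P π₀ C : ℝ)

theorem hasDerivAt_maximizingControl {x lam : ℝ → ℝ} {x' lam' t : ℝ}
    (hx : HasDerivAt x x' t) (hlam : HasDerivAt lam lam' t) :
    HasDerivAt (fun s => x s * (α + lam s * β * P * (1 - x s)) / (2 * C))
      ((x' * (α + lam t * β * P * (1 - 2 * x t)) + x t * lam' * β * P * (1 - x t)) / (2 * C))
      t := by
  have hfactor : HasDerivAt (fun s => α + lam s * β * P * (1 - x s))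
      (0 + (lam' * β * P * (1 - x t) + lam t * β * P * (0 - x'))) t :=
    (hasDerivAt_const t α).add
      (((hlam.mul_const β).mul_const P).mul ((hasDerivAt_const t 1).sub hx))
  exact ((hx.mul hfactor).div_const (2 * C)).congr_deriv (by ring)

theorem pontryagin_rate_eq (x lam u : ℝ) :
    β * x * (1 - x) * (P * u - π₀) * (α + lam * β * P * (1 - 2 * x)) +
        x * -(α * u + lam * β * (1 - 2 * x) * (P * u - π₀)) * β * P * (1 - x) =
      -(α * β * π₀) * x * (1 - x) := by
  ring

end QualityRevenueControl

theorem stmt_0_general (α β P π₀ C : ℝ)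
    (x lam u : ℝ → ℝ)
    (hx : Differentiable ℝ x) (hlam : Differentiable ℝ lam)
    (hu : ∀ t, u t = (x t * (α + lam t * β * P * (1 - x t))) / (2 * C))
    (hxdot : ∀ t, deriv x t = β * x t * (1 - x t) * (P * u t - π₀))
    (hlamdot : ∀ t, deriv lam t =
      -(α * u t + lam t * β * (1 - 2 * x t) * (P * u t - π₀))) :
    Differentiable ℝ u ∧
      ∀ t, deriv u t = -(α * β * π₀ / (2 * C)) * x t * (1 - x t) := by
  obtain rfl : u = fun t => x t * (α + lam t * β * P * (1 - x t)) / (2 * C) := funext hu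
  have hderiv t := hasDerivAt_maximizingControl α β P C (hx t).hasDerivAt (hlam t).hasDerivAt
  refine ⟨fun t => (hderiv t).differentiableAt, fun t => ?_⟩
  rw [(hderiv t).deriv, hxdot, hlamdot, pontryagin_rate_eq]
  ring

/-- Pontryagin system for the quality-dependent-revenue control problem:
the Hamiltonian-maximizing control `u` satisfies the stated ODE. -/
theorem stmt_0 (α β P π₀ C : ℝ) (hC : C ≠ 0)
    (x lam u : ℝ → ℝ)
    (hx : Differentiable ℝ x) (hlam : Differentiable ℝ lam)
    (hu : ∀ t, u t = (x t * (α + lam t * β * P * (1 - x t))) / (2 * C))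
    (hxdot : ∀ t, deriv x t = β * x t * (1 - x t) * (P * u t - π₀))
    (hlamdot : ∀ t, deriv lam t =
      -(α * u t + lam t * β * (1 - 2 * x t) * (P * u t - π₀))) :
    Differentiable ℝ u ∧
      ∀ t, deriv u t = -(α * β * π₀ / (2 * C)) * x t * (1 - x t) :=
  stmt_0_general α β P π₀ C x lam u hx hlam hu hxdot hlamdot
end

section
/- Suppose x, λ, u : ℝ → ℝ with x and λ differentiable, and for all t the function u satisfies u(t) = (x(t)·(α + λ(t)·β·P·(1 - x(t))))/(2C), x'(t) = β·x(t)·(1 - x(t))·(P·u(t) - π₀), and λ'(t) = -(α·u(t) + λ(t)·β·(1 - 2·x(t))·(P·u(t) - π₀)). If moreover α > 0, β > 0, π₀ > 0, C > 0 and x(t) ∈ [0,1] for all t, then u is monotone nonincreasing. -/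
/-!
Differentiating the feedback law `u = x (α + λ β P (1 - x)) / (2C)` along the state and costate
equations, every term containing the costate `λ` cancels, leaving
`u' = -α β π₀ x (1 - x) / (2C)`, which is nonpositive as soon as `0 ≤ x ≤ 1`.
-/

/-- The maximizer in `u` of the Hamiltonian `α u x - C u² + lam β x (1 - x) (P u - π₀)`. -/
noncomputable def optimalEffort (α β P C x lam : ℝ) : ℝ :=
  x * (α + lam * β * P * (1 - x)) / (2 * C)

section PontryaginSystem

variable {α β P π₀ C x' lam' t : ℝ} {x lam : ℝ → ℝ}

theorem HasDerivAt.optimalEffort (hx : HasDerivAt x x' t) (hlam : HasDerivAt lam lam' t) :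
    HasDerivAt (fun s => optimalEffort α β P C (x s) (lam s))
      ((x' * (α + lam t * β * P * (1 - x t)) +
        x t * (lam' * β * P * (1 - x t) + lam t * β * P * (0 - x'))) / (2 * C)) t :=
  (hx.mul ((((hlam.mul_const β).mul_const P).mul
    ((hasDerivAt_const t 1).sub hx)).const_add α)).div_const _

theorem hasDerivAt_optimalEffort_of_pontryagin
    (hx : HasDerivAt x
      (β * x t * (1 - x t) * (P * optimalEffort α β P C (x t) (lam t) - π₀)) t)
    (hlam : HasDerivAt lam
      (-(α * optimalEffort α β P C (x t) (lam t) +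
        lam t * β * (1 - 2 * x t) * (P * optimalEffort α β P C (x t) (lam t) - π₀))) t) :
    HasDerivAt (fun s => optimalEffort α β P C (x s) (lam s))
      (-(α * β * π₀) * (x t * (1 - x t)) / (2 * C)) t := by
  convert hx.optimalEffort hlam using 1
  ring

theorem effort_rate_nonpos (hα : 0 < α) (hβ : 0 < β) (hπ₀ : 0 < π₀) (hC : 0 < C) {y : ℝ}
    (hy : y ∈ Set.Icc (0 : ℝ) 1) :
    -(α * β * π₀) * (y * (1 - y)) / (2 * C) ≤ 0 := by
  have hy_mul : 0 ≤ y * (1 - y) := mul_nonneg hy.1 (sub_nonneg.mpr hy.2)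
  have hcoeff : -(α * β * π₀) ≤ 0 := neg_nonpos.mpr (by positivity)
  exact div_nonpos_of_nonpos_of_nonneg (mul_nonpos_of_nonpos_of_nonneg hcoeff hy_mul)
    (by positivity)

end PontryaginSystem

/-- Lehman's 7th law as an emergent property: along the Pontryagin system of the
quality-dependent-revenue control problem, optimal effort is nonincreasing. -/
theorem stmt_1 (α β P π₀ C : ℝ)
    (x lam u : ℝ → ℝ)
    (hx : Differentiable ℝ x) (hlam : Differentiable ℝ lam)
    (hu : ∀ t, u t = (x t * (α + lam t * β * P * (1 - x t))) / (2 * C))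
    (hxdot : ∀ t, deriv x t = β * x t * (1 - x t) * (P * u t - π₀))
    (hlamdot : ∀ t, deriv lam t =
      -(α * u t + lam t * β * (1 - 2 * x t) * (P * u t - π₀)))
    (hα : α > 0) (hβ : β > 0) (hπ₀ : π₀ > 0) (hC : C > 0)
    (hxrange : ∀ t, x t ∈ Set.Icc (0 : ℝ) 1) :
    Antitone u := by
  have hu_eq : u = fun s => optimalEffort α β P C (x s) (lam s) := funext hu
  subst hu_eq
  refine antitone_of_hasDerivAt_nonpos (fun t => ?_)
    (fun t => effort_rate_nonpos hα hβ hπ₀ hC (hxrange t))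
  refine hasDerivAt_optimalEffort_of_pontryagin ?_ ?_
  · simpa only [hxdot] using (hx t).hasDerivAt
  · simpa only [hlamdot] using (hlam t).hasDerivAt
end

section
/- Let a, b, f, g : ℝ → ℝ be differentiable, let r ≠ 0 be real, and suppose x, λ : ℝ → ℝ are differentiable functions such that, setting u(t) = (-b(x(t)) - g(x(t))·λ(t))/(2r), one has x'(t) = f(x(t)) + u(t)·g(x(t)) and λ'(t) = -a'(x(t)) - u(t)·(b'(x(t)) + λ(t)·g'(x(t))) - λ(t)·f'(x(t)) for all t. Then u is differentiable with u'(t) = (g(x(t))·a'(x(t)) - f(x(t))·b'(x(t)))/(2r) + λ(t)·(g(x(t))·f'(x(t)) - f(x(t))·g'(x(t)))/(2r). -/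
/-!
Differentiate `2 r u = -b(x) - g(x) λ` along the trajectory. Substituting `x' = f + u g` and the
co-state equation `λ' = -∂H/∂x`, the terms carrying `u` appear with coefficients
`-(b' + λ g') g` and `g (b' + λ g')`, so they cancel and `u'` depends on `x` and `λ` only.
-/

theorem hasDerivAt_comp_neg_sub_mul_div_const {b g x lam : ℝ → ℝ} (c t : ℝ)
    (hb : DifferentiableAt ℝ b (x t)) (hg : DifferentiableAt ℝ g (x t))
    (hx : DifferentiableAt ℝ x t) (hlam : DifferentiableAt ℝ lam t) :
    HasDerivAt (fun s => (-b (x s) - g (x s) * lam s) / c)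
      ((-(deriv b (x t) * deriv x t)
        - (deriv g (x t) * deriv x t * lam t + g (x t) * deriv lam t)) / c) t := by
  have hbx : HasDerivAt (fun s => b (x s)) (deriv b (x t) * deriv x t) t :=
    hb.hasDerivAt.comp t hx.hasDerivAt
  have hgx : HasDerivAt (fun s => g (x s)) (deriv g (x t) * deriv x t) t :=
    hg.hasDerivAt.comp t hx.hasDerivAt
  exact (hbx.neg.sub (hgx.mul hlam.hasDerivAt)).div_const c

theorem control_derivative_cancel (a' b' f f' g g' lam u : ℝ) :
    -(b' * (f + u * g)) - (g' * (f + u * g) * lam + g * (-a' - u * (b' + lam * g') - lam * f'))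
      = g * a' - f * b' + lam * (g * f' - f * g') := by
  ring

theorem stmt_11_general (a b f g : ℝ → ℝ)
    (hb : Differentiable ℝ b)
    (hg : Differentiable ℝ g)
    (r : ℝ)
    (x lam u : ℝ → ℝ)
    (hx : Differentiable ℝ x) (hlam : Differentiable ℝ lam)
    (hu : ∀ t, u t = (-b (x t) - g (x t) * lam t) / (2 * r))
    (hxdot : ∀ t, deriv x t = f (x t) + u t * g (x t))
    (hlamdot : ∀ t, deriv lam t =
      -deriv a (x t) - u t * (deriv b (x t) + lam t * deriv g (x t))
        - lam t * deriv f (x t)) :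
    Differentiable ℝ u ∧
      ∀ t, deriv u t =
        (g (x t) * deriv a (x t) - f (x t) * deriv b (x t)) / (2 * r)
          + lam t * ((g (x t) * deriv f (x t) - f (x t) * deriv g (x t)) / (2 * r)) := by
  obtain rfl : u = fun t => (-b (x t) - g (x t) * lam t) / (2 * r) := funext hu
  have hu' t := hasDerivAt_comp_neg_sub_mul_div_const (2 * r) t (hb (x t)) (hg (x t)) (hx t) (hlam t)
  refine ⟨fun t => (hu' t).differentiableAt, fun t => ?_⟩
  rw [(hu' t).deriv, hxdot t, hlamdot t, control_derivative_cancel]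
  ring

/-- The general Pontryagin system: the Hamiltonian-maximizing control satisfies
`u' = (g a' - f b')/(2r) + λ (g f' - f g')/(2r)` along the state. -/
theorem stmt_11 (a b f g : ℝ → ℝ)
    (ha : Differentiable ℝ a) (hb : Differentiable ℝ b)
    (hf : Differentiable ℝ f) (hg : Differentiable ℝ g)
    (r : ℝ) (hr : r ≠ 0)
    (x lam u : ℝ → ℝ)
    (hx : Differentiable ℝ x) (hlam : Differentiable ℝ lam)
    (hu : ∀ t, u t = (-b (x t) - g (x t) * lam t) / (2 * r))
    (hxdot : ∀ t, deriv x t = f (x t) + u t * g (x t))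
    (hlamdot : ∀ t, deriv lam t =
      -deriv a (x t) - u t * (deriv b (x t) + lam t * deriv g (x t))
        - lam t * deriv f (x t)) :
    Differentiable ℝ u ∧
      ∀ t, deriv u t =
        (g (x t) * deriv a (x t) - f (x t) * deriv b (x t)) / (2 * r)
          + lam t * ((g (x t) * deriv f (x t) - f (x t) * deriv g (x t)) / (2 * r)) :=
  stmt_11_general a b f g hb hg r x lam u hx hlam hu hxdot hlamdot
end

section
/- Let a, b, f, g : ℝ → ℝ be differentiable with g(y)·f'(y) - f(y)·g'(y) = 0 for all y, let r ≠ 0 be real, and suppose x, λ : ℝ → ℝ are differentiable functions such that, setting u(t) = (-b(x(t)) - g(x(t))·λ(t))/(2r), one has x'(t) = f(x(t)) + u(t)·g(x(t)) and λ'(t) = -a'(x(t)) - u(t)·(b'(x(t)) + λ(t)·g'(x(t))) - λ(t)·f'(x(t)) for all t. Then u is differentiable and u'(t) = (g(x(t))·a'(x(t)) - f(x(t))·b'(x(t)))/(2r); in particular u'(t) is a function of the state x(t) alone and does not involve the co-state λ(t). -/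
/-!
Differentiating `u = (-b(x) - g(x) λ) / (2r)` and substituting the state and co-state equations,
every term containing `λ` cancels except `λ (g f' - f g')`, so once this Wronskian-type
expression vanishes the derivative of the control depends on the state alone.
-/

theorem hasDerivAt_hamiltonian_control {a b f g x lam u : ℝ → ℝ} {r t : ℝ}
    (hb : DifferentiableAt ℝ b (x t)) (hg : DifferentiableAt ℝ g (x t))
    (hx : DifferentiableAt ℝ x t) (hlam : DifferentiableAt ℝ lam t)
    (hu : ∀ s, u s = (-b (x s) - g (x s) * lam s) / (2 * r))
    (hxdot : deriv x t = f (x t) + u t * g (x t))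
    (hlamdot : deriv lam t =
      -deriv a (x t) - u t * (deriv b (x t) + lam t * deriv g (x t))
        - lam t * deriv f (x t)) :
    HasDerivAt u
      ((g (x t) * deriv a (x t) - f (x t) * deriv b (x t)
        + lam t * (g (x t) * deriv f (x t) - f (x t) * deriv g (x t))) / (2 * r)) t := by
  have hbx : HasDerivAt (fun s => b (x s)) (deriv b (x t) * deriv x t) t :=
    hb.hasDerivAt.comp t hx.hasDerivAt
  have hgx : HasDerivAt (fun s => g (x s)) (deriv g (x t) * deriv x t) t :=
    hg.hasDerivAt.comp t hx.hasDerivAt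
  rw [funext hu]
  refine ((hbx.neg.sub (hgx.mul hlam.hasDerivAt)).div_const (2 * r)).congr_deriv ?_
  rw [hxdot, hlamdot]
  ring

theorem stmt_12_general (a b f g : ℝ → ℝ)
    (hb : Differentiable ℝ b)
    (hg : Differentiable ℝ g)
    (hW : ∀ y, g y * deriv f y - f y * deriv g y = 0)
    (r : ℝ)
    (x lam u : ℝ → ℝ)
    (hx : Differentiable ℝ x) (hlam : Differentiable ℝ lam)
    (hu : ∀ t, u t = (-b (x t) - g (x t) * lam t) / (2 * r))
    (hxdot : ∀ t, deriv x t = f (x t) + u t * g (x t))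
    (hlamdot : ∀ t, deriv lam t =
      -deriv a (x t) - u t * (deriv b (x t) + lam t * deriv g (x t))
        - lam t * deriv f (x t)) :
    Differentiable ℝ u ∧
      ∀ t, deriv u t =
        (g (x t) * deriv a (x t) - f (x t) * deriv b (x t)) / (2 * r) := by
  have hderiv : ∀ t, HasDerivAt u
      ((g (x t) * deriv a (x t) - f (x t) * deriv b (x t)) / (2 * r)) t := fun t => by
    simpa only [hW, mul_zero, add_zero] using
      hasDerivAt_hamiltonian_control (hb _) (hg _) (hx t) (hlam t) hu (hxdot t) (hlamdot t)
  exact ⟨fun t => (hderiv t).differentiableAt, fun t => (hderiv t).deriv⟩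

/-- Proposition 6: when the Wronskian-type expression `g f' - f g'` vanishes,
the control's derivative depends on the state alone. -/
theorem stmt_12 (a b f g : ℝ → ℝ)
    (ha : Differentiable ℝ a) (hb : Differentiable ℝ b)
    (hf : Differentiable ℝ f) (hg : Differentiable ℝ g)
    (hW : ∀ y, g y * deriv f y - f y * deriv g y = 0)
    (r : ℝ) (hr : r ≠ 0)
    (x lam u : ℝ → ℝ)
    (hx : Differentiable ℝ x) (hlam : Differentiable ℝ lam)
    (hu : ∀ t, u t = (-b (x t) - g (x t) * lam t) / (2 * r))
    (hxdot : ∀ t, deriv x t = f (x t) + u t * g (x t))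
    (hlamdot : ∀ t, deriv lam t =
      -deriv a (x t) - u t * (deriv b (x t) + lam t * deriv g (x t))
        - lam t * deriv f (x t)) :
    Differentiable ℝ u ∧
      ∀ t, deriv u t =
        (g (x t) * deriv a (x t) - f (x t) * deriv b (x t)) / (2 * r) :=
  stmt_12_general a b f g hb hg hW r x lam u hx hlam hu hxdot hlamdot
end

section
/- Suppose x, λ, u : ℝ → ℝ with x and λ differentiable, and for all t the function u satisfies u(t) = (β·P·λ(t)·x(t)·(1 - x(t)))/(2C), the state satisfies x'(t) = β·x(t)·(1 - x(t))·(P·u(t) - π₀), and the co-state satisfies the Pontryagin condition λ'(t) = -(α + λ(t)·β·(1 - 2·x(t))·(P·u(t) - π₀)). Then u is differentiable and u'(t) = -(α·β·P/(2C))·x(t)·(1 - x(t)) for all t. -/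
/-! The control `u` is the constant multiple `β P / (2 C)` of `λ · x (1 - x)`, and along the state
and co-state equations the control-dependent terms in the derivative of `λ · x (1 - x)` cancel,
leaving `-α · x (1 - x)`. -/

theorem hasDerivAt_mul_logistic_of_costate {x lam : ℝ → ℝ} {α g t : ℝ}
    (hx : HasDerivAt x (x t * (1 - x t) * g) t)
    (hlam : HasDerivAt lam (-(α + lam t * (1 - 2 * x t) * g)) t) :
    HasDerivAt (fun s => lam s * (x s * (1 - x s))) (-α * (x t * (1 - x t))) t := by
  have hlogistic : HasDerivAt (fun s => x s * (1 - x s))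
      (x t * (1 - x t) * g * (1 - 2 * x t)) t :=
    (hx.mul (hx.const_sub 1)).congr_deriv (by ring)
  exact (hlam.mul hlogistic).congr_deriv (by ring)

theorem stmt_15_general (α β P π₀ C : ℝ)
    (x lam u : ℝ → ℝ)
    (hx : Differentiable ℝ x) (hlam : Differentiable ℝ lam)
    (hu : ∀ t, u t = (β * P * lam t * x t * (1 - x t)) / (2 * C))
    (hxdot : ∀ t, deriv x t = β * x t * (1 - x t) * (P * u t - π₀))
    (hlamdot : ∀ t, deriv lam t =
      -(α + lam t * β * (1 - 2 * x t) * (P * u t - π₀))) :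
    Differentiable ℝ u ∧
      ∀ t, deriv u t = -(α * β * P / (2 * C)) * x t * (1 - x t) := by
  have hu_eq : u = fun t => β * P / (2 * C) * (lam t * (x t * (1 - x t))) := by
    funext t
    rw [hu]
    ring
  have hu_deriv : ∀ t, HasDerivAt u (-(α * β * P / (2 * C)) * x t * (1 - x t)) t := by
    intro t
    have hx_deriv : HasDerivAt x (x t * (1 - x t) * (β * (P * u t - π₀))) t :=
      (hx t).hasDerivAt.congr_deriv (by rw [hxdot]; ring)
    have hlam_deriv : HasDerivAt lam (-(α + lam t * (1 - 2 * x t) * (β * (P * u t - π₀)))) t :=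
      (hlam t).hasDerivAt.congr_deriv (by rw [hlamdot]; ring)
    rw [hu_eq]
    exact ((hasDerivAt_mul_logistic_of_costate hx_deriv hlam_deriv).const_mul
      (β * P / (2 * C))).congr_deriv (by ring)
  exact ⟨fun t => (hu_deriv t).differentiableAt, fun t => (hu_deriv t).deriv⟩

/-- Pontryagin system for the constant-revenue control problem: the
Hamiltonian-maximizing control `u` satisfies the stated ODE. -/
theorem stmt_15 (α β P π₀ C : ℝ) (hC : C ≠ 0)
    (x lam u : ℝ → ℝ)
    (hx : Differentiable ℝ x) (hlam : Differentiable ℝ lam)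
    (hu : ∀ t, u t = (β * P * lam t * x t * (1 - x t)) / (2 * C))
    (hxdot : ∀ t, deriv x t = β * x t * (1 - x t) * (P * u t - π₀))
    (hlamdot : ∀ t, deriv lam t =
      -(α + lam t * β * (1 - 2 * x t) * (P * u t - π₀))) :
    Differentiable ℝ u ∧
      ∀ t, deriv u t = -(α * β * P / (2 * C)) * x t * (1 - x t) :=
  stmt_15_general α β P π₀ C x lam u hx hlam hu hxdot hlamdot
end
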